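/- If H₀, H₁, …, Hₙ are smooth functions on a symplectic manifold, then the density ρ_∞ = e^{−βH₀} satisfies {ρ_∞, H₀} + (β/2) Σ_i {ρ_∞ {H₀, H_i}, H_i} + (1/2) Σ_i {{ρ_∞, H_i}, H_i} = 0; hence the Gibbs density is a stationary solution of the Fokker–Planck equation of the stochastic Hamiltonian system with double-bracket dissipation. -/

import Mathlib

/-!
By the chain rule, `{ρ∞, H₀} = -β ρ∞ {H₀, H₀} = 0` and
`{{ρ∞, Hᵢ}, Hᵢ} = -β {ρ∞ {H₀, Hᵢ}, Hᵢ}`, so the noise sum is `-β` times the dissipation sum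
and the two cancel against the weights `β/2` and `1/2`.
-/

theorem LinearMap.isAlt_of_antisymm {R M N : Type*} [CommSemiring R] [AddCommMonoid M] [Module R M]
    [AddCommGroup N] [Module R N] [IsAddTorsionFree N] {B : M →ₗ[R] M →ₗ[R] N}
    (hB : ∀ x y, B x y = -B y x) : B.IsAlt :=
  fun x => self_eq_neg.mp (hB x x)

section GibbsDensity

variable {R A : Type*} [CommRing R] [NonUnitalNonAssocSemiring A] [Module R A]
  {P : A →ₗ[R] A →ₗ[R] A} {β : R} {H0 ρ : A}

theorem bracket_gibbs_hamiltonian_eq_zero (hP : P.IsAlt)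
    (hchain : ∀ F, P ρ F = (-β) • (ρ * P H0 F)) : P ρ H0 = 0 := by
  rw [hchain, hP.self_eq_zero, mul_zero, smul_zero]

theorem bracket_bracket_gibbs_eq (hchain : ∀ F, P ρ F = (-β) • (ρ * P H0 F)) (G : A) :
    P (P ρ G) G = (-β) • P (ρ * P H0 G) G := by
  rw [hchain, map_smul, LinearMap.smul_apply]

end GibbsDensity

theorem gibbs_density_stationary_double_bracket_general
    {A : Type*} [CommRing A] [Algebra ℝ A]
    (P : A →ₗ[ℝ] A →ₗ[ℝ] A)
    (h_anti : ∀ F G : A, P F G = - P G F)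
    (β : ℝ) {n : ℕ} (H0 : A) (Hs : Fin n → A) (ρ : A)
    (hchain : ∀ F : A, P ρ F = (-β) • (ρ * P H0 F)) :
    P ρ H0 + (β / 2) • (∑ i, P (ρ * P H0 (Hs i)) (Hs i))
        + (1/2 : ℝ) • (∑ i, P (P ρ (Hs i)) (Hs i)) = 0 := by
  have : IsAddTorsionFree A := .of_isTorsionFree ℝ A
  rw [bracket_gibbs_hamiltonian_eq_zero (LinearMap.isAlt_of_antisymm h_anti) hchain,
    Finset.sum_congr rfl fun i _ => bracket_bracket_gibbs_eq hchain (Hs i), ← Finset.smul_sum]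
  module

/-- Let `{·,·}` be a Poisson bracket (bilinear, antisymmetric,
satisfying the Jacobi identity and the Leibniz rule) on the commutative algebra of
smooth functions on a symplectic manifold, let `H₀, H₁, …, Hₙ` be functions, `β > 0`,
and let `ρ∞ = e^{−βH₀}`, characterised by the chain rule
`{ρ∞, F} = −β ρ∞ {H₀, F}`.  Then
`{ρ∞,H₀} + (β/2) Σᵢ {ρ∞{H₀,Hᵢ}, Hᵢ} + (1/2) Σᵢ {{ρ∞,Hᵢ}, Hᵢ} = 0`:
the Gibbs density is a stationary solution of the Fokker–Planck equation of the
stochastic Hamiltonian system with double-bracket dissipation. -/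
theorem gibbs_density_stationary_double_bracket
    {A : Type*} [CommRing A] [Algebra ℝ A]
    (P : A →ₗ[ℝ] A →ₗ[ℝ] A)
    (h_anti : ∀ F G : A, P F G = - P G F)
    (h_leibniz : ∀ F G H : A, P (F * G) H = F * P G H + G * P F H)
    (h_jacobi : ∀ F G H : A, P F (P G H) + P G (P H F) + P H (P F G) = 0)
    (β : ℝ) (hβ : 0 < β) {n : ℕ} (H0 : A) (Hs : Fin n → A) (ρ : A)
    (hchain : ∀ F : A, P ρ F = (-β) • (ρ * P H0 F)) :
    P ρ H0 + (β / 2) • (∑ i, P (ρ * P H0 (Hs i)) (Hs i))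
        + (1/2 : ℝ) • (∑ i, P (P ρ (Hs i)) (Hs i)) = 0 :=
  gibbs_density_stationary_double_bracket_general P h_anti β H0 Hs ρ hchain
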